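/- Let F_q be a quantum torus. Then the derived Lie algebra [F_q, F_q] is a perfect Lie algebra with zero center, and consequently its derivation algebra Der([F_q, F_q]) is complete. -/

import Mathlib

/-!
A quantum torus is a twisted group algebra of `ℤⁿ` whose twisting `σ` is bimultiplicative, so
`⁅t a, t b⁆ = (σ a b - σ b a) • t (a + b)` and
`σ a (a + b) - σ (a + b) a = σ a a * (σ a b - σ b a)`.
Hence the derived algebra is spanned by the `t c` with `c` outside the radical
`{c | ∀ a, σ a c = σ c a}`. Each such `t c` is a multiple of `⁅t a, t (c - a)⁆` with both factors
again in the derived algebra, which gives perfectness, and the coefficient of `t (a + c)` in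
`⁅t a, x⁆` is `(σ a c - σ c a)` times that of `t c` in `x`, which kills the center.

For a perfect centerless Lie algebra `L`, `ad L` is an ideal of `Der L` with zero centralizer, and
perfectness forces every derivation of `Der L` to preserve it; so every such derivation is the
bracket with a derivation of `L`, and `Der L` is complete.
-/

open Finset in
/-- The twisting scalar `σ(a,b) = ∏_{i>j} q_{ji}^{a_j b_i}` of a quantum torus. -/
noncomputable def quantumSigma {n : ℕ} {F : Type*} [Field F]
    (q : Matrix (Fin n) (Fin n) F) (a b : Fin n → ℤ) : F :=
  ∏ i : Fin n, ∏ j ∈ Finset.univ.filter (fun j => j < i), q j i ^ (a j * b i)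

/-- A Lie algebra is complete if its center is zero and every derivation is inner. -/
def IsCompleteLieAlgebra (K : Type*) (M : Type*) [Field K] [LieRing M] [LieAlgebra K M] : Prop :=
  LieAlgebra.center K M = ⊥ ∧
    ∀ D : LieDerivation K M M, ∃ m : M, D = LieDerivation.ad K M m

namespace LieDerivation

section CommRing

variable {R L : Type*} [CommRing R] [LieRing L] [LieAlgebra R L]

lemma center_eq_bot_of_center_eq_bot (h : LieAlgebra.center R L = ⊥) :
    LieAlgebra.center R (LieDerivation R L L) = ⊥ := by
  refine (LieSubmodule.eq_bot_iff _).mpr fun D hD ↦ ?_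
  have hD' : D ∈ LieModule.maxTrivSubmodule R L (LieDerivation R L L) := fun x ↦ by
    rw [← lie_ad]
    exact hD (ad R L x)
  rwa [maxTrivSubmodule_eq_bot_of_center_eq_bot h] at hD'

lemma apply_ad_lie
    (Δ : LieDerivation R (LieDerivation R L L) (LieDerivation R L L)) (x y : L) :
    Δ (ad R L ⁅x, y⁆) = ad R L (Δ (ad R L x) y - Δ (ad R L y) x) := by
  rw [map_sub, LieHom.map_lie, Δ.apply_lie_eq_add, ← lie_der_ad_eq_ad_der,
    ← lie_der_ad_eq_ad_der, ← lie_skew (ad R L x)]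
  abel

lemma exists_apply_ad_eq_ad (hp : ⁅(⊤ : LieIdeal R L), (⊤ : LieIdeal R L)⁆ = ⊤)
    (Δ : LieDerivation R (LieDerivation R L L) (LieDerivation R L L)) (z : L) :
    ∃ w, Δ (ad R L z) = ad R L w := by
  let P : Submodule R L :=
    (LinearMap.range (ad R L : L →ₗ[R] LieDerivation R L L)).comap
      ((Δ : LieDerivation R L L →ₗ[R] LieDerivation R L L) ∘ₗ (ad R L : L →ₗ[R] _))
  suffices hP : (⊤ : LieIdeal R L).toSubmodule ≤ P by
    obtain ⟨w, hw⟩ := hP (LieSubmodule.mem_top z)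
    exact ⟨w, hw.symm⟩
  rw [← hp, LieSubmodule.lieIdeal_oper_eq_linear_span, Submodule.span_le]
  rintro _ ⟨x, y, rfl⟩
  exact ⟨_, (apply_ad_lie Δ x y).symm⟩

lemma ext_of_apply_ad (h : LieAlgebra.center R L = ⊥)
    {Δ₁ Δ₂ : LieDerivation R (LieDerivation R L L) (LieDerivation R L L)}
    (hΔ : ∀ x, Δ₁ (ad R L x) = Δ₂ (ad R L x)) : Δ₁ = Δ₂ := by
  have key : ∀ (Δ : LieDerivation R (LieDerivation R L L) (LieDerivation R L L)) E x,
      ad R L (Δ E x) = Δ (ad R L (E x)) - ⁅E, Δ (ad R L x)⁆ := fun Δ E x ↦ by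
    rw [← lie_der_ad_eq_ad_der, ← lie_der_ad_eq_ad_der, Δ.apply_lie_eq_add]
    abel
  ext E x
  exact injective_ad_of_center_eq_bot h (by rw [key, key, hΔ, hΔ])

/-- Perfectness makes `Δ` preserve `ad L`, and injectivity of `ad` pulls `Δ ∘ ad` back to a
derivation `δ` of `L`. -/
lemma exists_apply_ad_eq_lie (hp : ⁅(⊤ : LieIdeal R L), (⊤ : LieIdeal R L)⁆ = ⊤)
    (hc : LieAlgebra.center R L = ⊥)
    (Δ : LieDerivation R (LieDerivation R L L) (LieDerivation R L L)) :
    ∃ δ : LieDerivation R L L, ∀ x, Δ (ad R L x) = ⁅δ, ad R L x⁆ := by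
  have hinj := injective_ad_of_center_eq_bot hc
  choose f hf using exists_apply_ad_eq_ad hp Δ
  let δ : LieDerivation R L L :=
    { toFun := f
      map_add' := fun x y ↦ hinj <| by simp only [← hf, map_add]
      map_smul' := fun c x ↦ hinj <| by simp only [← hf, map_smul, RingHom.id_apply]
      leibniz' := fun x y ↦ hinj <| by
        change ad R L (f ⁅x, y⁆) = ad R L (⁅x, f y⁆ - ⁅y, f x⁆)
        rw [← hf, apply_ad_lie, hf, hf, ad_apply_apply, ad_apply_apply, ← lie_skew (f y) x,
          ← lie_skew y (f x), sub_neg_eq_add, sub_neg_eq_add, add_comm] }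
  exact ⟨δ, fun x ↦ by rw [lie_der_ad_eq_ad_der, hf]; rfl⟩

end CommRing

theorem isCompleteLieAlgebra_of_perfect_of_center_eq_bot {K L : Type*} [Field K] [LieRing L]
    [LieAlgebra K L] (hp : ⁅(⊤ : LieIdeal K L), (⊤ : LieIdeal K L)⁆ = ⊤)
    (hc : LieAlgebra.center K L = ⊥) :
    IsCompleteLieAlgebra K (LieDerivation K L L) := by
  refine ⟨center_eq_bot_of_center_eq_bot hc, fun Δ ↦ ?_⟩
  obtain ⟨δ, hδ⟩ := exists_apply_ad_eq_lie hp hc Δ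
  exact ⟨δ, ext_of_apply_ad hc fun x ↦ by rw [hδ, ad_apply_apply]⟩

end LieDerivation

attribute [local instance 100] LieRing.ofAssociativeRing

namespace LieIdeal

variable {R L : Type*} [CommRing R] [LieRing L] [LieAlgebra R L]

lemma lie_top_top_eq_top_of_le_lie {I : LieIdeal R L} (h : I ≤ ⁅I, I⁆) :
    ⁅(⊤ : LieIdeal R I), (⊤ : LieIdeal R I)⁆ = ⊤ := by
  have hI : ⁅I, I⁆ = I := le_antisymm (LieSubmodule.lie_le_left I I) h
  simpa [LieAlgebra.derivedSeries_def, LieAlgebra.derivedSeriesOfIdeal_succ, hI,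
    comap_incl_self] using derivedSeries_eq_derivedSeriesOfIdeal_comap (R := R) (I := I) 1

end LieIdeal

lemma Module.Basis.lie_mem_of_lie_mem {ι R L : Type*} [CommRing R] [LieRing L] [LieAlgebra R L]
    (b : Module.Basis ι R L) {V : Submodule R L} (h : ∀ i j, ⁅b i, b j⁆ ∈ V) (x y : L) :
    ⁅x, y⁆ ∈ V := by
  have hzero : (LieAlgebra.ad R L : L →ₗ[R] Module.End R L).compr₂ V.mkQ = 0 :=
    LinearMap.ext_basis b b fun i j ↦ (Submodule.Quotient.mk_eq_zero V).mpr (h i j)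
  simpa using LinearMap.congr_fun₂ hzero x y

def nonCentralDegrees {G F : Type*} (σ : G → G → F) : Set G := {c | ∃ a, σ a c ≠ σ c a}

lemma basis_mem_of_eq_span_nonCentralDegrees {G F A : Type*} [Field F] [Ring A] [Algebra F A]
    {σ : G → G → F} {t : Module.Basis G F A} {I : LieIdeal F A}
    (hI : I.toSubmodule = Submodule.span F (t '' nonCentralDegrees σ)) {c : G}
    (hc : c ∈ nonCentralDegrees σ) : t c ∈ I := by
  rw [← LieSubmodule.mem_toSubmodule, hI]
  exact Submodule.subset_span ⟨c, hc, rfl⟩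

section TwistedGroupAlgebra

variable {G F A : Type*} [AddCommGroup G] [Field F] [Ring A] [Algebra F A]
  {σ : G → G → F} {t : Module.Basis G F A}

lemma lie_basis (hmul : ∀ a b, t a * t b = σ a b • t (a + b)) (a b : G) :
    ⁅t a, t b⁆ = (σ a b - σ b a) • t (a + b) := by
  rw [Ring.lie_def, hmul, hmul, add_comm b a, sub_smul]

lemma sub_swap_self_add_eq_mul (hl : ∀ a a' b, σ (a + a') b = σ a b * σ a' b)
    (hr : ∀ a b b', σ a (b + b') = σ a b * σ a b') (a b : G) :
    σ a (a + b) - σ (a + b) a = σ a a * (σ a b - σ b a) := by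
  rw [hl, hr, mul_sub]

lemma ne_swap_sub_of_ne (hl : ∀ a a' b, σ (a + a') b = σ a b * σ a' b)
    (hr : ∀ a b b', σ a (b + b') = σ a b * σ a b') {a c : G} (h : σ a c ≠ σ c a) :
    σ a (c - a) ≠ σ (c - a) a := fun h' ↦ h <| by
  rw [← sub_eq_zero, ← add_sub_cancel a c, sub_swap_self_add_eq_mul hl hr, sub_eq_zero.mpr h',
    mul_zero]

lemma basis_eq_smul_lie (hmul : ∀ a b, t a * t b = σ a b • t (a + b)) {a c : G}
    (h : σ a (c - a) ≠ σ (c - a) a) :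
    t c = (σ a (c - a) - σ (c - a) a)⁻¹ • ⁅t a, t (c - a)⁆ := by
  rw [lie_basis hmul, smul_smul, inv_mul_cancel₀ (sub_ne_zero.mpr h), one_smul, add_sub_cancel]

lemma repr_lie_basis_add (hmul : ∀ a b, t a * t b = σ a b • t (a + b)) (a c : G) (x : A) :
    t.repr ⁅t a, x⁆ (a + c) = (σ a c - σ c a) * t.repr x c := by
  have key : (Finsupp.lapply (a + c)) ∘ₗ (t.repr : A →ₗ[F] G →₀ F) ∘ₗ LieAlgebra.ad F A (t a) =
      (σ a c - σ c a) • (Finsupp.lapply c ∘ₗ (t.repr : A →ₗ[F] G →₀ F)) := by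
    refine t.ext fun e ↦ ?_
    by_cases he : e = c
    · simp [he, lie_basis hmul]
    · simp [lie_basis hmul, Ne.symm he]
  simpa using LinearMap.congr_fun key x

lemma derived_eq_span_nonCentralDegrees (hmul : ∀ a b, t a * t b = σ a b • t (a + b))
    (h0 : ∀ a, σ a a ≠ 0) (hl : ∀ a a' b, σ (a + a') b = σ a b * σ a' b)
    (hr : ∀ a b b', σ a (b + b') = σ a b * σ a b') :
    (⁅(⊤ : LieIdeal F A), (⊤ : LieIdeal F A)⁆ : LieIdeal F A).toSubmodule =
      Submodule.span F (t '' nonCentralDegrees σ) := by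
  apply le_antisymm
  · rw [LieSubmodule.lieIdeal_oper_eq_linear_span, Submodule.span_le]
    rintro _ ⟨x, y, rfl⟩
    refine t.lie_mem_of_lie_mem (fun a b ↦ ?_) x y
    rw [lie_basis hmul]
    by_cases h : σ a b = σ b a
    · simp [h]
    · have hab : σ a (a + b) ≠ σ (a + b) a := by
        rw [← sub_ne_zero, sub_swap_self_add_eq_mul hl hr]
        exact mul_ne_zero (h0 a) (sub_ne_zero.mpr h)
      exact Submodule.smul_mem _ _ (Submodule.subset_span ⟨a + b, ⟨a, hab⟩, rfl⟩)
  · rw [Submodule.span_le]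
    rintro _ ⟨c, ⟨a, ha⟩, rfl⟩
    rw [basis_eq_smul_lie hmul (ne_swap_sub_of_ne hl hr ha)]
    exact Submodule.smul_mem _ _
      (LieSubmodule.lie_mem_lie (LieSubmodule.mem_top _) (LieSubmodule.mem_top _))

variable {I : LieIdeal F A}

lemma le_lie_self_of_eq_span_nonCentralDegrees (hmul : ∀ a b, t a * t b = σ a b • t (a + b))
    (hl : ∀ a a' b, σ (a + a') b = σ a b * σ a' b) (hr : ∀ a b b', σ a (b + b') = σ a b * σ a b')
    (hI : I.toSubmodule = Submodule.span F (t '' nonCentralDegrees σ)) : I ≤ ⁅I, I⁆ := by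
  rw [← LieSubmodule.toSubmodule_le_toSubmodule, hI, Submodule.span_le]
  rintro _ ⟨c, ⟨a, ha⟩, rfl⟩
  have ha' := ne_swap_sub_of_ne hl hr ha
  rw [basis_eq_smul_lie hmul ha']
  exact Submodule.smul_mem _ _
    (LieSubmodule.lie_mem_lie (basis_mem_of_eq_span_nonCentralDegrees hI ⟨c - a, ha'.symm⟩)
      (basis_mem_of_eq_span_nonCentralDegrees hI ⟨a, ha'⟩))

lemma center_eq_bot_of_eq_span_nonCentralDegrees (hmul : ∀ a b, t a * t b = σ a b • t (a + b))
    (hI : I.toSubmodule = Submodule.span F (t '' nonCentralDegrees σ)) :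
    LieAlgebra.center F I = ⊥ := by
  refine (LieSubmodule.eq_bot_iff _).mpr fun x hx ↦ ?_
  have hsupp : ↑(t.repr x).support ⊆ nonCentralDegrees σ := by
    rw [← t.mem_span_image, ← hI]
    exact x.2
  suffices t.repr x = 0 by simpa using this
  ext c
  by_contra hc
  obtain ⟨a, ha⟩ := hsupp (Finsupp.mem_support_iff.mpr hc)
  have hax : ⁅t a, (x : A)⁆ = 0 :=
    congrArg Subtype.val (hx ⟨t a, basis_mem_of_eq_span_nonCentralDegrees hI ⟨c, ha.symm⟩⟩)
  have := repr_lie_basis_add hmul a c x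
  rw [hax, map_zero, Finsupp.zero_apply] at this
  exact mul_ne_zero (sub_ne_zero.mpr ha) hc this.symm

end TwistedGroupAlgebra

section QuantumSigma

variable {n : ℕ} {F : Type*} [Field F] (q : Matrix (Fin n) (Fin n) F)

theorem quantumSigma_ne_zero (hq0 : ∀ i j, q i j ≠ 0) (a b : Fin n → ℤ) :
    quantumSigma q a b ≠ 0 :=
  Finset.prod_ne_zero_iff.mpr fun i _ ↦
    Finset.prod_ne_zero_iff.mpr fun j _ ↦ zpow_ne_zero _ (hq0 j i)

theorem quantumSigma_add_left (hq0 : ∀ i j, q i j ≠ 0) (a a' b : Fin n → ℤ) :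
    quantumSigma q (a + a') b = quantumSigma q a b * quantumSigma q a' b := by
  simp only [quantumSigma, ← Finset.prod_mul_distrib, ← zpow_add₀ (hq0 _ _), Pi.add_apply,
    add_mul]

theorem quantumSigma_add_right (hq0 : ∀ i j, q i j ≠ 0) (a b b' : Fin n → ℤ) :
    quantumSigma q a (b + b') = quantumSigma q a b * quantumSigma q a b' := by
  simp only [quantumSigma, ← Finset.prod_mul_distrib, ← zpow_add₀ (hq0 _ _), Pi.add_apply,
    mul_add]

end QuantumSigma

theorem quantumTorus_derived_perfect_centerless_and_der_complete_general {n : ℕ} (F : Type*)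
    [Field F]
    (q : Matrix (Fin n) (Fin n) F) (hq0 : ∀ i j, q i j ≠ 0)
    (A : Type*) [Ring A] [Algebra F A] (t : Module.Basis ((Fin n) → ℤ) F A)
    (hmul : ∀ a b : Fin n → ℤ, t a * t b = quantumSigma q a b • t (a + b)) :
    ⁅(⊤ : LieIdeal F ↥(⁅(⊤ : LieIdeal F A), (⊤ : LieIdeal F A)⁆ : LieIdeal F A)),
        (⊤ : LieIdeal F ↥(⁅(⊤ : LieIdeal F A), (⊤ : LieIdeal F A)⁆ : LieIdeal F A))⁆ = ⊤ ∧
    LieAlgebra.center F ↥(⁅(⊤ : LieIdeal F A), (⊤ : LieIdeal F A)⁆ : LieIdeal F A) = ⊥ ∧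
    IsCompleteLieAlgebra F
      (LieDerivation F ↥(⁅(⊤ : LieIdeal F A), (⊤ : LieIdeal F A)⁆ : LieIdeal F A)
        ↥(⁅(⊤ : LieIdeal F A), (⊤ : LieIdeal F A)⁆ : LieIdeal F A)) := by
  have hl := quantumSigma_add_left q hq0
  have hr := quantumSigma_add_right q hq0
  have hI := derived_eq_span_nonCentralDegrees hmul (fun a ↦ quantumSigma_ne_zero q hq0 a a) hl hr
  have hperf := LieIdeal.lie_top_top_eq_top_of_le_lie
    (le_lie_self_of_eq_span_nonCentralDegrees hmul hl hr hI)
  have hcen := center_eq_bot_of_eq_span_nonCentralDegrees hmul hI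
  exact ⟨hperf, hcen, LieDerivation.isCompleteLieAlgebra_of_perfect_of_center_eq_bot hperf hcen⟩

/-- The derived algebra `[F_q, F_q]` of a quantum torus is a perfect Lie algebra with
zero center, and consequently its derivation algebra is complete. -/
theorem quantumTorus_derived_perfect_centerless_and_der_complete {n : ℕ} (F : Type*)
    [Field F] [CharZero F]
    (q : Matrix (Fin n) (Fin n) F) (hq0 : ∀ i j, q i j ≠ 0) (hq1 : ∀ i, q i i = 1)
    (hq2 : ∀ i j, q j i = (q i j)⁻¹)
    (A : Type*) [Ring A] [Algebra F A] (t : Module.Basis ((Fin n) → ℤ) F A)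
    (hmul : ∀ a b : Fin n → ℤ, t a * t b = quantumSigma q a b • t (a + b)) :
    ⁅(⊤ : LieIdeal F ↥(⁅(⊤ : LieIdeal F A), (⊤ : LieIdeal F A)⁆ : LieIdeal F A)),
        (⊤ : LieIdeal F ↥(⁅(⊤ : LieIdeal F A), (⊤ : LieIdeal F A)⁆ : LieIdeal F A))⁆ = ⊤ ∧
    LieAlgebra.center F ↥(⁅(⊤ : LieIdeal F A), (⊤ : LieIdeal F A)⁆ : LieIdeal F A) = ⊥ ∧
    IsCompleteLieAlgebra F
      (LieDerivation F ↥(⁅(⊤ : LieIdeal F A), (⊤ : LieIdeal F A)⁆ : LieIdeal F A)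
        ↥(⁅(⊤ : LieIdeal F A), (⊤ : LieIdeal F A)⁆ : LieIdeal F A)) :=
  quantumTorus_derived_perfect_centerless_and_der_complete_general F q hq0 A t hmul
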